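/- arXiv:1509.06210 — 3 statements merged into one kernel-verified Lean document; each statement's English description precedes it below -/
import Mathlib

section
/- (Existence of minimizer, long positions) Let (p^n) be functions on (0,∞), each non-increasing and continuous, with: (i) there exists γ>0 with limsup_n sup_{0<q≤γ} q|p^n(q)| < ∞; (ii) there exist r_n → ∞ and δ>0 with p^n(ℓ r_n) → p∞(ℓ) for 0<ℓ<δ; (iii) limsup_n p^n(∞) < p∞₊(0) where p^n(∞) := lim_{q→∞} p^n(q) and p∞₊(0) := lim_{ℓ↓0} p∞(ℓ). If p̃^n → p̃ with limsup_n p^n(∞) < p̃ < p∞₊(0), then for all n large enough the problem inf_{q>0} (q p̃^n - q p^n(q)) admits a minimizer q̂_n > 0. -/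
/-!
Write `f n q = q * p̃ⁿ - q * pⁿ(q)`. Pick `ℓ ∈ (0, δ)` with `p∞(ℓ) > p̃`; then
`f n (ℓ rₙ) = ℓ rₙ (p̃ⁿ - pⁿ(ℓ rₙ)) → -∞`. On `(0, γ]` the functions `f n` are bounded below
uniformly in `n` by (i), and for each large `n` they are eventually positive at infinity because
`pⁿ(∞) < p̃ⁿ`. So for large `n` the minimum of `f n` over a compact interval `[γ, M]` containing
`ℓ rₙ` is a global minimum over `(0, ∞)`.
-/

open Filter Topology Set

theorem ContinuousOn.exists_isMinOn_Ioi {f : ℝ → ℝ} {a γ q₀ : ℝ} (hf : ContinuousOn f (Ioi a))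
    (haγ : a < γ) (hγq₀ : γ ≤ q₀) (hsmall : ∀ q ∈ Ioc a γ, f q₀ ≤ f q)
    (hlarge : ∀ᶠ q in atTop, f q₀ ≤ f q) : ∃ qh ∈ Ioi a, IsMinOn f (Ioi a) qh := by
  obtain ⟨M, hM⟩ := eventually_atTop.mp hlarge
  have hsub : Icc γ (max M q₀) ⊆ Ioi a := fun x hx => haγ.trans_le hx.1
  obtain ⟨qh, hqh, hmin⟩ := isCompact_Icc.exists_isMinOn ⟨q₀, hγq₀, le_max_right _ _⟩ (hf.mono hsub)
  have hqh₀ : f qh ≤ f q₀ := hmin ⟨hγq₀, le_max_right _ _⟩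
  refine ⟨qh, hsub hqh, fun q (hq : a < q) => ?_⟩
  rcases le_or_gt q γ with hqγ | hγq
  · exact hqh₀.trans (hsmall q ⟨hq, hqγ⟩)
  rcases le_or_gt q (max M q₀) with hqM | hMq
  · exact hmin ⟨hγq.le, hqM⟩
  · exact hqh₀.trans (hM q ((le_max_left _ _).trans hMq.le))

theorem exists_mem_Ioo_lt_of_tendsto_nhdsGT {g : ℝ → ℝ} {a b c L : ℝ}
    (hg : Tendsto g (𝓝[>] a) (𝓝 L)) (hcL : c < L) (hab : a < b) : ∃ ℓ ∈ Ioo a b, c < g ℓ :=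
  (Filter.Eventually.and (Ioo_mem_nhdsGT hab) (hg.eventually (eventually_gt_nhds hcL))).exists

theorem neg_le_mul_sub_mul {q γ t x B C : ℝ} (hq : q ∈ Ioc 0 γ) (ht : |t| ≤ B)
    (hx : q * |x| ≤ C) : -(γ * B + C) ≤ q * t - q * x := by
  have htB : q * -t ≤ γ * B := calc
    q * -t ≤ q * |t| := mul_le_mul_of_nonneg_left (neg_le_abs t) hq.1.le
    _ ≤ γ * B := mul_le_mul hq.2 ht (abs_nonneg t) (hq.1.le.trans hq.2)
  have hxC : q * x ≤ C := (mul_le_mul_of_nonneg_left (le_abs_self x) hq.1.le).trans hx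
  linarith

theorem eventually_pos_mul_sub_mul {g : ℝ → ℝ} {L t : ℝ} (hg : Tendsto g atTop (𝓝 L))
    (hLt : L < t) : ∀ᶠ q in atTop, 0 < q * t - q * g q := by
  filter_upwards [hg.eventually (eventually_lt_nhds hLt), eventually_gt_atTop 0] with q hgq hq
  rw [← mul_sub]
  exact mul_pos hq (sub_pos.2 hgq)

theorem stmt6_general (p : ℕ → ℝ → ℝ)
    (hcont : ∀ n, ContinuousOn (p n) (Set.Ioi 0))
    (γ : ℝ) (hγ : 0 < γ)
    (hbound : ∃ C : ℝ, ∀ᶠ n in atTop, ∀ q ∈ Set.Ioc (0:ℝ) γ, q * |p n q| ≤ C)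
    (r : ℕ → ℝ) (hr : Tendsto r atTop atTop)
    (δ : ℝ) (hδ : 0 < δ) (pinf : ℝ → ℝ)
    (hconv : ∀ ℓ : ℝ, 0 < ℓ → ℓ < δ → Tendsto (fun n => p n (ℓ * r n)) atTop (𝓝 (pinf ℓ)))
    (pninf : ℕ → ℝ) (hpninf : ∀ n, Tendsto (fun q => p n q) atTop (𝓝 (pninf n)))
    (pinf0 : ℝ) (hpinf0 : Tendsto pinf (𝓝[>] 0) (𝓝 pinf0))
    (pt : ℕ → ℝ) (ptl : ℝ) (hpt : Tendsto pt atTop (𝓝 ptl))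
    (hlb : ∃ m : ℝ, m < ptl ∧ ∀ᶠ n in atTop, pninf n ≤ m)
    (hub : ptl < pinf0) :
    ∃ N : ℕ, ∀ n ≥ N, ∃ qh : ℝ, 0 < qh ∧
      ∀ q : ℝ, 0 < q → qh * pt n - qh * p n qh ≤ q * pt n - q * p n q := by
  obtain ⟨C, hC⟩ := hbound
  obtain ⟨m, hm, hmev⟩ := hlb
  obtain ⟨ℓ, ⟨hℓ, hℓδ⟩, hℓpt⟩ := exists_mem_Ioo_lt_of_tendsto_nhdsGT hpinf0 hub hδ
  set B := |ptl| + 1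
  have hqn : Tendsto (fun n => ℓ * r n) atTop atTop := hr.const_mul_atTop hℓ
  have hval : Tendsto (fun n => ℓ * r n * pt n - ℓ * r n * p n (ℓ * r n)) atTop atBot := by
    simp_rw [← mul_sub]
    exact hqn.atTop_mul_neg (sub_neg.2 hℓpt) (hpt.sub (hconv ℓ hℓ hℓδ))
  refine eventually_atTop.mp ?_
  filter_upwards [hC, hpt.abs.eventually (eventually_lt_nhds (lt_add_one |ptl|)),
    hpt.eventually (eventually_gt_nhds hm), hmev, hqn.eventually_ge_atTop γ,
    hval.eventually (eventually_lt_atBot (min (-(γ * B + C)) 0))]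
    with n hCn hBn hmn hpninfn hγn hneg
  obtain ⟨qh, hqh, hmin⟩ := ContinuousOn.exists_isMinOn_Ioi
    (f := fun q => q * pt n - q * p n q)
    ((continuousOn_id.mul continuousOn_const).sub (continuousOn_id.mul (hcont n))) hγ hγn
    (fun q hq => (hneg.le.trans (min_le_left _ _)).trans (neg_le_mul_sub_mul hq hBn.le (hCn q hq)))
    ((eventually_pos_mul_sub_mul (hpninf n) (hpninfn.trans_lt hmn)).mono
      fun q hq => hneg.le.trans ((min_le_right _ _).trans hq.le))
  exact ⟨qh, hqh, fun q hq => hmin hq⟩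

theorem stmt6 (p : ℕ → ℝ → ℝ)
    (hanti : ∀ n, AntitoneOn (p n) (Set.Ioi 0))
    (hcont : ∀ n, ContinuousOn (p n) (Set.Ioi 0))
    (γ : ℝ) (hγ : 0 < γ)
    (hbound : ∃ C : ℝ, ∀ᶠ n in atTop, ∀ q ∈ Set.Ioc (0:ℝ) γ, q * |p n q| ≤ C)
    (r : ℕ → ℝ) (hrpos : ∀ n, 0 < r n) (hr : Tendsto r atTop atTop)
    (δ : ℝ) (hδ : 0 < δ) (pinf : ℝ → ℝ)
    (hconv : ∀ ℓ : ℝ, 0 < ℓ → ℓ < δ → Tendsto (fun n => p n (ℓ * r n)) atTop (𝓝 (pinf ℓ)))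
    (pninf : ℕ → ℝ) (hpninf : ∀ n, Tendsto (fun q => p n q) atTop (𝓝 (pninf n)))
    (pinf0 : ℝ) (hpinf0 : Tendsto pinf (𝓝[>] 0) (𝓝 pinf0))
    (pt : ℕ → ℝ) (ptl : ℝ) (hpt : Tendsto pt atTop (𝓝 ptl))
    (hlb : ∃ m : ℝ, m < ptl ∧ ∀ᶠ n in atTop, pninf n ≤ m)
    (hub : ptl < pinf0) :
    ∃ N : ℕ, ∀ n ≥ N, ∃ qh : ℝ, 0 < qh ∧
      ∀ q : ℝ, 0 < q → qh * pt n - qh * p n qh ≤ q * pt n - q * p n q :=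
  stmt6_general p hcont γ hγ hbound r hr δ hδ pinf hconv pninf hpninf pinf0 hpinf0 pt ptl hpt hlb
    hub
end

section
/- (Lower bound on minimizers, long positions) Under the assumptions of the previous statement (Assumption A.1 in the paper, with limsup_n p^n(∞) < p̃ < p∞₊(0)), any sequence (q̂_n) of minimizers of q ↦ q p̃^n - q p^n(q) over (0,∞) satisfies liminf_n q̂_n / r_n > 0. -/
/-!
Pick `ℓ ∈ (0, δ)` with `p̃ < p∞(ℓ)`. Testing the minimality of `q̂ₙ` against `q = ℓ rₙ` shows that
the profit `q̂ₙ (pⁿ(q̂ₙ) - p̃ⁿ)` grows at least linearly in `rₙ`. On the other hand the bound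
`q |pⁿ(q)| ≤ C` on `(0, γ]` and monotonicity beyond `γ` bound the profit of any `q` by an affine
function of `q`, uniformly in `n`. Hence `q̂ₙ` grows at least linearly in `rₙ`.
-/

open Filter Topology Set

lemma mul_sub_le_of_antitoneOn {f : ℝ → ℝ} (hf : AntitoneOn f (Ioi 0)) {γ C M t q : ℝ}
    (hγ : 0 < γ) (hC : ∀ q ∈ Ioc 0 γ, q * |f q| ≤ C) (ht : |t| ≤ M) (hq : 0 < q) :
    q * (f q - t) ≤ C + γ * M + (C / γ + M) * q := by
  have hfγ : γ * |f γ| ≤ C := hC γ ⟨hγ, le_rfl⟩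
  have hC0 : 0 ≤ C := (by positivity : 0 ≤ γ * |f γ|).trans hfγ
  have hM0 : 0 ≤ M := (abs_nonneg t).trans ht
  have hqt : -(q * t) ≤ q * M := by
    rw [← mul_neg]; exact mul_le_mul_of_nonneg_left ((neg_le_abs t).trans ht) hq.le
  rcases le_or_gt q γ with hqγ | hγq
  · have hfq : q * f q ≤ C := (mul_le_mul_of_nonneg_left (le_abs_self _) hq.le).trans (hC q ⟨hq, hqγ⟩)
    have hqM : q * M ≤ γ * M := mul_le_mul_of_nonneg_right hqγ hM0
    have : 0 ≤ (C / γ + M) * q := by positivity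
    linarith
  · have hfq : f q ≤ C / γ := by
      rw [le_div_iff₀ hγ]
      calc f q * γ ≤ |f γ| * γ :=
            mul_le_mul_of_nonneg_right ((hf hγ hq hγq.le).trans (le_abs_self _)) hγ.le
        _ ≤ C := by linarith
    have : q * f q ≤ q * (C / γ) := mul_le_mul_of_nonneg_left hfq hq.le
    have : 0 ≤ C + γ * M := by positivity
    linarith

lemma exists_pos_le_div_of_le_add_mul {u r : ℕ → ℝ} {b A K : ℝ} (hb : 0 < b) (hK : 0 < K)
    (hrpos : ∀ n, 0 < r n) (hr : Tendsto r atTop atTop) (h : ∀ᶠ n in atTop, b * r n ≤ A + K * u n) :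
    ∃ c : ℝ, 0 < c ∧ ∀ᶠ n in atTop, c ≤ u n / r n := by
  refine ⟨b / (2 * K), by positivity, ?_⟩
  filter_upwards [h, hr.eventually_ge_atTop (2 * A / b)] with n hn hrn
  have hA : 2 * A ≤ b * r n := by rwa [div_le_iff₀' hb] at hrn
  rw [le_div_iff₀ (hrpos n), div_mul_eq_mul_div, div_le_iff₀ (by positivity)]
  linarith

theorem stmt7_general (p : ℕ → ℝ → ℝ)
    (hanti : ∀ n, AntitoneOn (p n) (Set.Ioi 0))
    (γ : ℝ) (hγ : 0 < γ)
    (hbound : ∃ C : ℝ, ∀ᶠ n in atTop, ∀ q ∈ Set.Ioc (0:ℝ) γ, q * |p n q| ≤ C)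
    (r : ℕ → ℝ) (hrpos : ∀ n, 0 < r n) (hr : Tendsto r atTop atTop)
    (δ : ℝ) (hδ : 0 < δ) (pinf : ℝ → ℝ)
    (hconv : ∀ ℓ : ℝ, 0 < ℓ → ℓ < δ → Tendsto (fun n => p n (ℓ * r n)) atTop (𝓝 (pinf ℓ)))
    (pinf0 : ℝ) (hpinf0 : Tendsto pinf (𝓝[>] 0) (𝓝 pinf0))
    (pt : ℕ → ℝ) (ptl : ℝ) (hpt : Tendsto pt atTop (𝓝 ptl))
    (hub : ptl < pinf0)
    (qhat : ℕ → ℝ) (hqhat_pos : ∀ n, 0 < qhat n)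
    (hqhat_min : ∀ n, ∀ q : ℝ, 0 < q →
      qhat n * pt n - qhat n * p n (qhat n) ≤ q * pt n - q * p n q) :
    ∃ c : ℝ, 0 < c ∧ ∀ᶠ n in atTop, c ≤ qhat n / r n := by
  obtain ⟨C, hC⟩ := hbound
  have hC0 : 0 ≤ C := by
    obtain ⟨n, hn⟩ := hC.exists
    exact (by positivity : 0 ≤ γ * |p n γ|).trans (hn γ ⟨hγ, le_rfl⟩)
  obtain ⟨ℓ, ⟨hℓ, hℓδ⟩, hℓpos⟩ :=
    ((hpinf0.eventually (eventually_gt_nhds hub)).and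
      ((eventually_lt_nhds hδ).filter_mono nhdsWithin_le_nhds) |>.and self_mem_nhdsWithin).exists
  have hgap : ∀ᶠ n in atTop, (pinf ℓ - ptl) / 2 < p n (ℓ * r n) - pt n :=
    ((hconv ℓ hℓpos hℓδ).sub hpt).eventually (eventually_gt_nhds (by linarith))
  have hM : ∀ᶠ n in atTop, |pt n| ≤ |ptl| + 1 :=
    hpt.abs.eventually (eventually_le_nhds (lt_add_one _))
  refine exists_pos_le_div_of_le_add_mul (b := ℓ * ((pinf ℓ - ptl) / 2))
    (A := C + γ * (|ptl| + 1)) (K := C / γ + (|ptl| + 1)) (mul_pos hℓpos (by linarith)) (by positivity) hrpos hr ?_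
  filter_upwards [hC, hgap, hM] with n hCn hgapn hMn
  have hℓr : 0 < ℓ * r n := mul_pos hℓpos (hrpos n)
  have hmin := hqhat_min n (ℓ * r n) hℓr
  calc ℓ * ((pinf ℓ - ptl) / 2) * r n = ℓ * r n * ((pinf ℓ - ptl) / 2) := by ring
    _ ≤ ℓ * r n * (p n (ℓ * r n) - pt n) := mul_le_mul_of_nonneg_left hgapn.le hℓr.le
    _ ≤ qhat n * (p n (qhat n) - pt n) := by linarith
    _ ≤ _ := mul_sub_le_of_antitoneOn (hanti n) hγ hCn hMn (hqhat_pos n)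

theorem stmt7 (p : ℕ → ℝ → ℝ)
    (hanti : ∀ n, AntitoneOn (p n) (Set.Ioi 0))
    (hcont : ∀ n, ContinuousOn (p n) (Set.Ioi 0))
    (γ : ℝ) (hγ : 0 < γ)
    (hbound : ∃ C : ℝ, ∀ᶠ n in atTop, ∀ q ∈ Set.Ioc (0:ℝ) γ, q * |p n q| ≤ C)
    (r : ℕ → ℝ) (hrpos : ∀ n, 0 < r n) (hr : Tendsto r atTop atTop)
    (δ : ℝ) (hδ : 0 < δ) (pinf : ℝ → ℝ)
    (hconv : ∀ ℓ : ℝ, 0 < ℓ → ℓ < δ → Tendsto (fun n => p n (ℓ * r n)) atTop (𝓝 (pinf ℓ)))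
    (pninf : ℕ → ℝ) (hpninf : ∀ n, Tendsto (fun q => p n q) atTop (𝓝 (pninf n)))
    (pinf0 : ℝ) (hpinf0 : Tendsto pinf (𝓝[>] 0) (𝓝 pinf0))
    (pt : ℕ → ℝ) (ptl : ℝ) (hpt : Tendsto pt atTop (𝓝 ptl))
    (hlb : ∃ m : ℝ, m < ptl ∧ ∀ᶠ n in atTop, pninf n ≤ m)
    (hub : ptl < pinf0)
    (qhat : ℕ → ℝ) (hqhat_pos : ∀ n, 0 < qhat n)
    (hqhat_min : ∀ n, ∀ q : ℝ, 0 < q →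
      qhat n * pt n - qhat n * p n (qhat n) ≤ q * pt n - q * p n q) :
    ∃ c : ℝ, 0 < c ∧ ∀ᶠ n in atTop, c ≤ qhat n / r n :=
  stmt7_general p hanti γ hγ hbound r hrpos hr δ hδ pinf hconv pinf0 hpinf0 pt ptl hpt hub qhat
    hqhat_pos hqhat_min
end

section
/- (Upper bound on minimizers, long positions) In the setting of Proposition A.1, define δ⁺ := sup{k > 0 : p^n(ℓ r_n) → p∞(ℓ) for all 0 < ℓ < k} ∈ [δ, ∞]. If in addition lim_{ℓ↑δ⁺} p∞(ℓ) < p̃ < p∞₊(0), then any sequence (q̂_n) of minimizers satisfies limsup_n q̂_n / r_n < δ⁺. -/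
/-!
Pick `ℓ₀ < δ⁺` with `p∞(ℓ₀) < p̃` and a small `ℓ₁ < δ` with `p̃ < p∞(ℓ₁)`. For large `n` the
objective `q (p̃ⁿ - pⁿ(q))` is negative at `ℓ₁ rₙ`, whereas by monotonicity it is positive at every
`q ≥ ℓ₀ rₙ`; hence every minimizer lies below `ℓ₀ rₙ`.
-/

open Filter Topology

theorem of_coe_lt_sSup_setOf_forall_lt {P : ℝ → Prop} {ℓ : ℝ} (hℓ : 0 < ℓ)
    (h : (ℓ : EReal) < sSup {k : EReal | ∃ k' : ℝ, k = (k' : EReal) ∧ 0 < k' ∧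
      ∀ ℓ : ℝ, 0 < ℓ → ℓ < k' → P ℓ}) : P ℓ := by
  obtain ⟨_, ⟨k', rfl, -, hk'⟩, hℓk'⟩ := lt_sSup_iff.mp h
  exact hk' ℓ hℓ (EReal.coe_lt_coe_iff.mp hℓk')

theorem AntitoneOn.lt_of_isMinOn_mul_sub_mul {f : ℝ → ℝ} (hf : AntitoneOn f (Set.Ioi 0))
    {t q a b : ℝ} (hq : 0 < q) (ha : 0 < a) (hb : 0 < b)
    (hmin : IsMinOn (fun x => x * t - x * f x) (Set.Ioi 0) q)
    (hfa : f a < t) (hfb : t < f b) : q < a := by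
  by_contra! haq
  have hfq : f q ≤ f a := hf ha hq haq
  have hneg : b * t - b * f b < 0 := by nlinarith
  have hpos : 0 < q * t - q * f q := by nlinarith
  have hle : q * t - q * f q ≤ b * t - b * f b := hmin (Set.mem_Ioi.mpr hb)
  linarith

theorem stmt8_general (p : ℕ → ℝ → ℝ)
    (hanti : ∀ n, AntitoneOn (p n) (Set.Ioi 0))
    (r : ℕ → ℝ) (hrpos : ∀ n, 0 < r n)
    (δ : ℝ) (hδ : 0 < δ) (pinf : ℝ → ℝ)
    (hconv : ∀ ℓ : ℝ, 0 < ℓ → ℓ < δ → Tendsto (fun n => p n (ℓ * r n)) atTop (𝓝 (pinf ℓ)))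
    (pinf0 : ℝ) (hpinf0 : Tendsto pinf (𝓝[>] 0) (𝓝 pinf0))
    (δplus : EReal)
    (hδplus : δplus = sSup {k : EReal | ∃ k' : ℝ, k = (k' : EReal) ∧ 0 < k' ∧
      ∀ ℓ : ℝ, 0 < ℓ → ℓ < k' → Tendsto (fun n => p n (ℓ * r n)) atTop (𝓝 (pinf ℓ))})
    (pt : ℕ → ℝ) (ptl : ℝ) (hpt : Tendsto pt atTop (𝓝 ptl))
    (hlb : ∃ ℓ₀ : ℝ, 0 < ℓ₀ ∧ (ℓ₀ : EReal) < δplus ∧ pinf ℓ₀ < ptl)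
    (hub : ptl < pinf0)
    (qhat : ℕ → ℝ) (hqhat_pos : ∀ n, 0 < qhat n)
    (hqhat_min : ∀ n, ∀ q : ℝ, 0 < q →
      qhat n * pt n - qhat n * p n (qhat n) ≤ q * pt n - q * p n q) :
    ∃ c : ℝ, (c : EReal) < δplus ∧ ∀ᶠ n in atTop, qhat n / r n ≤ c := by
  obtain ⟨ℓ₀, hℓ₀, hℓ₀δplus, hpinfℓ₀⟩ := hlb
  have hconv₀ : Tendsto (fun n => p n (ℓ₀ * r n)) atTop (𝓝 (pinf ℓ₀)) :=
    of_coe_lt_sSup_setOf_forall_lt hℓ₀ (hδplus ▸ hℓ₀δplus)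
  obtain ⟨ℓ₁, hpinfℓ₁, hℓ₁, hℓ₁δ⟩ : ∃ ℓ₁, ptl < pinf ℓ₁ ∧ ℓ₁ ∈ Set.Ioo 0 δ :=
    ((hpinf0.eventually (eventually_gt_nhds hub)).and (Ioo_mem_nhdsGT hδ)).exists
  refine ⟨ℓ₀, hℓ₀δplus, ?_⟩
  filter_upwards [(hconv₀.sub hpt).eventually (eventually_lt_nhds (sub_neg.mpr hpinfℓ₀)),
    (hpt.sub (hconv ℓ₁ hℓ₁ hℓ₁δ)).eventually (eventually_lt_nhds (sub_neg.mpr hpinfℓ₁))]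
    with n hfa hfb
  have hq : qhat n < ℓ₀ * r n :=
    (hanti n).lt_of_isMinOn_mul_sub_mul (hqhat_pos n) (mul_pos hℓ₀ (hrpos n))
      (mul_pos hℓ₁ (hrpos n)) (fun q hq => hqhat_min n q hq) (sub_neg.mp hfa) (sub_neg.mp hfb)
  exact (div_le_iff₀ (hrpos n)).mpr hq.le

theorem stmt8 (p : ℕ → ℝ → ℝ)
    (hanti : ∀ n, AntitoneOn (p n) (Set.Ioi 0))
    (hcont : ∀ n, ContinuousOn (p n) (Set.Ioi 0))
    (γ : ℝ) (hγ : 0 < γ)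
    (hbound : ∃ C : ℝ, ∀ᶠ n in atTop, ∀ q ∈ Set.Ioc (0:ℝ) γ, q * |p n q| ≤ C)
    (r : ℕ → ℝ) (hrpos : ∀ n, 0 < r n) (hr : Tendsto r atTop atTop)
    (δ : ℝ) (hδ : 0 < δ) (pinf : ℝ → ℝ)
    (hconv : ∀ ℓ : ℝ, 0 < ℓ → ℓ < δ → Tendsto (fun n => p n (ℓ * r n)) atTop (𝓝 (pinf ℓ)))
    (pninf : ℕ → ℝ) (hpninf : ∀ n, Tendsto (fun q => p n q) atTop (𝓝 (pninf n)))
    (pinf0 : ℝ) (hpinf0 : Tendsto pinf (𝓝[>] 0) (𝓝 pinf0))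
    (hstanding : ∃ m : ℝ, m < pinf0 ∧ ∀ᶠ n in atTop, pninf n ≤ m)
    (δplus : EReal)
    (hδplus : δplus = sSup {k : EReal | ∃ k' : ℝ, k = (k' : EReal) ∧ 0 < k' ∧
      ∀ ℓ : ℝ, 0 < ℓ → ℓ < k' → Tendsto (fun n => p n (ℓ * r n)) atTop (𝓝 (pinf ℓ))})
    (hpinf_anti : ∀ ℓ₁ ℓ₂ : ℝ, 0 < ℓ₁ → ℓ₁ ≤ ℓ₂ → (ℓ₂ : EReal) < δplus → pinf ℓ₂ ≤ pinf ℓ₁)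
    (pt : ℕ → ℝ) (ptl : ℝ) (hpt : Tendsto pt atTop (𝓝 ptl))
    (hlb : ∃ ℓ₀ : ℝ, 0 < ℓ₀ ∧ (ℓ₀ : EReal) < δplus ∧ pinf ℓ₀ < ptl)
    (hub : ptl < pinf0)
    (qhat : ℕ → ℝ) (hqhat_pos : ∀ n, 0 < qhat n)
    (hqhat_min : ∀ n, ∀ q : ℝ, 0 < q →
      qhat n * pt n - qhat n * p n (qhat n) ≤ q * pt n - q * p n q) :
    ∃ c : ℝ, (c : EReal) < δplus ∧ ∀ᶠ n in atTop, qhat n / r n ≤ c :=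
  stmt8_general p hanti r hrpos δ hδ pinf hconv pinf0 hpinf0 δplus hδplus pt ptl hpt hlb hub qhat
    hqhat_pos hqhat_min
end
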